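/- arXiv:0908.1055 — 4 statements merged into one kernel-verified Lean document; each statement's English description precedes it below -/
import Mathlib

section
/- Let E be a countable directed graph and (X,μ) an E-branching system. Define Y = X \ ⋃_{e∈E¹} R_e. Then there exists a nonsingular map F : X → X such that F restricted to R_e equals f_e⁻¹ μ-a.e. for every e ∈ E¹. -/
/-!
Define `F` on `⋃ e, R_e` by choosing, at each point, one edge `e` with `x ∈ R_e` and
applying `f_e⁻¹`, and let `F` be the identity elsewhere. A point of `R_e` where
`F ≠ f_e⁻¹` lies in some overlap `R_e ∩ R_d` with `d ≠ e`, and there are countably many of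
these null sets. For nonsingularity, `F⁻¹(A) ⊆ A ∪ ⋃ e, (R_e ∩ (f_e⁻¹)⁻¹(A))`, and each
`R_e ∩ (f_e⁻¹)⁻¹(A)` is null for null `A` by the absolute continuity of `μ ∘ f_e`.
-/

open MeasureTheory Set
open scoped symmDiff

namespace MeasureTheory

section IPiecewise

variable {X ι : Type*} (R : ι → Set X) (g : ι → X → X)

open Classical in
noncomputable def iPiecewise (x : X) : X :=
  if h : ∃ i, x ∈ R i then g h.choose x else x

theorem iPiecewise_preimage_subset (A : Set X) :
    iPiecewise R g ⁻¹' A ⊆ A ∪ ⋃ i, R i ∩ g i ⁻¹' A := by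
  intro x hx
  simp only [mem_preimage, iPiecewise] at hx
  split_ifs at hx with h
  · exact Or.inr (mem_iUnion.mpr ⟨h.choose, h.choose_spec, hx⟩)
  · exact Or.inl hx

theorem iPiecewise_ne_inter_subset (i : ι) :
    {x | iPiecewise R g x ≠ g i x} ∩ R i ⊆ ⋃ (j) (_ : j ≠ i), R i ∩ R j := by
  rintro x ⟨hne, hxi⟩
  have h : ∃ j, x ∈ R j := ⟨i, hxi⟩
  have hchoose : h.choose ≠ i := by
    rintro hji
    exact hne (by simp only [iPiecewise, dif_pos h, hji])
  exact mem_biUnion hchoose ⟨hxi, h.choose_spec⟩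

variable [MeasurableSpace X] {μ : Measure X} [Countable ι]

theorem measure_iPiecewise_preimage_null
    (hg : ∀ i A, μ A = 0 → μ (R i ∩ g i ⁻¹' A) = 0) {A : Set X} (hA : μ A = 0) :
    μ (iPiecewise R g ⁻¹' A) = 0 :=
  measure_mono_null (iPiecewise_preimage_subset R g A)
    (measure_union_null hA (measure_iUnion_null fun i => hg i A hA))

theorem ae_restrict_iPiecewise_eq {i : ι} (hRi : MeasurableSet (R i))
    (hdisj : ∀ j, j ≠ i → μ (R i ∩ R j) = 0) :
    ∀ᵐ x ∂μ.restrict (R i), iPiecewise R g x = g i x := by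
  rw [ae_iff, Measure.restrict_apply' hRi]
  exact measure_mono_null (iPiecewise_ne_inter_subset R g i)
    (measure_iUnion_null fun j => measure_iUnion_null (hdisj j))

end IPiecewise

theorem measure_inter_preimage_null_of_map_restrict_ac {X Y : Type*} [MeasurableSpace X]
    [MeasurableSpace Y] {μ : Measure X} {ν : Measure Y} {s : Set X} {g : X → Y}
    (hg : AEMeasurable g (μ.restrict s)) (hac : (μ.restrict s).map g ≪ ν) {A : Set Y}
    (hA : ν A = 0) : μ (s ∩ g ⁻¹' A) = 0 := by
  refine le_antisymm ?_ bot_le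
  calc μ (s ∩ g ⁻¹' A) = μ (g ⁻¹' A ∩ s) := by rw [inter_comm]
    _ ≤ μ.restrict s (g ⁻¹' A) := Measure.le_restrict_apply s _
    _ ≤ (μ.restrict s).map g A := Measure.le_map_apply hg A
    _ = 0 := hac hA

end MeasureTheory

theorem stmt7_general {X : Type*} [MeasurableSpace X] (μ : Measure X)
    {E0 E1 : Type*} [Countable E1] (r : E1 → E0)
    (R : E1 → Set X) (D : E0 → Set X)
    (hRmeas : ∀ e, MeasurableSet (R e))
    -- (1),(2) essential pairwise disjointness:
    (hRdisj : ∀ e d : E1, e ≠ d → μ (R e ∩ R d) = 0)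
    -- (5),(6) the maps f_e and their a.e. inverses f_e⁻¹:
    (finv : E1 → X → X) (hfinv : ∀ e, Measurable (finv e))
    -- μ∘f_e (the measure A ↦ μ(f_e(A)), which equals (μ|_{R_e}) ∘ (f_e⁻¹)⁻¹) is absolutely
    -- continuous with respect to μ on D_{r(e)}:
    (hac : ∀ e : E1, (μ.restrict (R e)).map (finv e) ≪ μ.restrict (D (r e))) :
    ∃ F : X → X,
      -- F is nonsingular:
      (∀ A : Set X, MeasurableSet A → μ A = 0 → μ (F ⁻¹' A) = 0) ∧
      -- F = f_e⁻¹ μ-a.e. on R_e for every edge e: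
      (∀ e : E1, ∀ᵐ x ∂μ.restrict (R e), F x = finv e x) := by
  have hnull : ∀ e A, μ A = 0 → μ (R e ∩ finv e ⁻¹' A) = 0 := fun e _ hA =>
    measure_inter_preimage_null_of_map_restrict_ac (hfinv e).aemeasurable
      ((hac e).trans (Measure.absolutelyContinuous_of_le Measure.restrict_le_self)) hA
  exact ⟨iPiecewise R finv, fun _ _ hA => measure_iPiecewise_preimage_null R finv hnull hA,
    fun e => ae_restrict_iPiecewise_eq R finv (hRmeas e) fun d hd => hRdisj e d hd.symm⟩

/-- Every E-branching system `(X, μ)` of a countable directed graph admits a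
nonsingular map `F : X → X` with `F = f_e⁻¹` μ-a.e. on `R_e` for every edge `e`, i.e. every
E-branching system is a nonsingular E-branching system. -/
theorem stmt7 {X : Type*} [MeasurableSpace X] (μ : Measure X)
    {E0 E1 : Type*} [Countable E0] [Countable E1] (r s : E1 → E0)
    (R : E1 → Set X) (D : E0 → Set X)
    (hRmeas : ∀ e, MeasurableSet (R e)) (hDmeas : ∀ v, MeasurableSet (D v))
    -- (1),(2) essential pairwise disjointness:
    (hRdisj : ∀ e d : E1, e ≠ d → μ (R e ∩ R d) = 0)
    (hDdisj : ∀ u v : E0, u ≠ v → μ (D u ∩ D v) = 0)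
    -- (3) R_e ⊆ D_{s(e)} mod null:
    (hRD : ∀ e : E1, μ (R e \ D (s e)) = 0)
    -- (5),(6) the maps f_e and their a.e. inverses f_e⁻¹:
    (f finv : E1 → X → X) (hf : ∀ e, Measurable (f e)) (hfinv : ∀ e, Measurable (finv e))
    (hmaps : ∀ e, Set.MapsTo (f e) (D (r e)) (R e))
    (hmapsinv : ∀ e, Set.MapsTo (finv e) (R e) (D (r e)))
    (himage : ∀ e, μ ((f e '' D (r e)) ∆ R e) = 0)
    (hright : ∀ e, ∀ᵐ x ∂μ.restrict (R e), f e (finv e x) = x)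
    (hleft : ∀ e, ∀ᵐ x ∂μ.restrict (D (r e)), finv e (f e x) = x)
    -- μ∘f_e (the measure A ↦ μ(f_e(A)), which equals (μ|_{R_e}) ∘ (f_e⁻¹)⁻¹) is absolutely
    -- continuous with respect to μ on D_{r(e)}:
    (hac : ∀ e : E1, (μ.restrict (R e)).map (finv e) ≪ μ.restrict (D (r e))) :
    ∃ F : X → X,
      -- F is nonsingular:
      (∀ A : Set X, MeasurableSet A → μ A = 0 → μ (F ⁻¹' A) = 0) ∧
      -- F = f_e⁻¹ μ-a.e. on R_e for every edge e:
      (∀ e : E1, ∀ᵐ x ∂μ.restrict (R e), F x = finv e x) :=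
  stmt7_general μ r R D hRmeas hRdisj finv hfinv hac
end

section
/- Let (X,μ,F) be a nonsingular E-branching system for a countable directed graph E, let P_F denote the Perron–Frobenius operator of F on L¹(X,μ), and let π denote the induced representation operators. If φ ∈ L²(X,μ) is real-valued with support contained in R_{e_1} ∪ ⋯ ∪ R_{e_N} (a finite union), then P_F(φ²) = Σ_{i=1}^N (π(S_{e_i})* φ)², where π(S_e)*φ = χ_{D_{r(e)}}·Φ_{f_e}^{1/2}·(φ∘f_e). -/
/-!
`P_F ψ` is determined by `∫_A P_F ψ = ∫_{F⁻¹A} ψ`. For `ψ ≥ 0` vanishing off `⋃ R_e`, split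
`F⁻¹A` along the a.e. disjoint `R_e`; on `R_e` we have `F = f_e⁻¹`, and the substitution
`y = f_e⁻¹ x`, whose Jacobian is `Φ_{f_e}`, gives
`∫_{F⁻¹A ∩ R_e} ψ = ∫_A χ_{D_{r(e)}} Φ_{f_e} (ψ ∘ f_e)`.
Hence `P_F ψ = Σ_e χ_{D_{r(e)}} Φ_{f_e} (ψ ∘ f_e)`, and for `ψ = φ²` the `e`-th term is
`(π(S_e)* φ)²`.
-/

open MeasureTheory Set
open scoped ENNReal symmDiff Function

theorem setIntegral_eq_sum_setIntegral_inter {X ι : Type*} [MeasurableSpace X] {μ : Measure X}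
    [Fintype ι] {s : Set X} {t : ι → Set X} {ψ : X → ℝ} (hs : MeasurableSet s)
    (ht : ∀ i, MeasurableSet (t i)) (hd : Pairwise (AEDisjoint μ on t))
    (hψ : IntegrableOn ψ s μ) (hsupp : ∀ᵐ x ∂μ, x ∉ ⋃ i, t i → ψ x = 0) :
    ∫ x in s, ψ x ∂μ = ∑ i, ∫ x in s ∩ t i, ψ x ∂μ := by
  have hvanish : ∀ᵐ x ∂μ, x ∈ s \ (s ∩ ⋃ i, t i) → ψ x = 0 := by
    filter_upwards [hsupp] with x hx hxs using hx fun hxt => hxs.2 ⟨hxs.1, hxt⟩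
  rw [setIntegral_eq_of_subset_of_ae_sdiff_eq_zero hs.nullMeasurableSet inter_subset_left hvanish,
    inter_iUnion, integral_iUnion_ae (fun i => (hs.inter (ht i)).nullMeasurableSet)
      (fun i j hij => (hd hij).mono inter_subset_right inter_subset_right)
      (hψ.mono_set (iUnion_subset fun i => inter_subset_left)), tsum_fintype]

namespace BranchingSystem

variable {X : Type*}

noncomputable def edgeTransfer (D : Set X) (Φ : X → ℝ) (f : X → X) (ψ : X → ℝ) : X → ℝ :=
  D.indicator fun y => Φ y * ψ (f y)

section Edge

variable {D : Set X} {f : X → X} {Φ ψ : X → ℝ}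

theorem edgeTransfer_nonneg (hΦ₀ : 0 ≤ Φ) (hψ₀ : 0 ≤ ψ) : 0 ≤ edgeTransfer D Φ f ψ :=
  fun y => indicator_nonneg (fun y _ => mul_nonneg (hΦ₀ y) (hψ₀ _)) y

theorem sq_indicator_sqrt_mul_comp (hΦ₀ : 0 ≤ Φ) (φ : X → ℝ) (y : X) :
    (D.indicator (fun y => Real.sqrt (Φ y) * φ (f y)) y) ^ 2
      = edgeTransfer D Φ f (fun x => φ x ^ 2) y := by
  by_cases hy : y ∈ D
  · simp [edgeTransfer, hy, mul_pow, Real.sq_sqrt (hΦ₀ y)]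
  · simp [edgeTransfer, hy]

section Measure

variable [MeasurableSpace X] {μ : Measure X} {R A : Set X} {g F : X → X}

theorem measurable_edgeTransfer (hD : MeasurableSet D) (hΦ : Measurable Φ) (hf : Measurable f)
    (hψ : Measurable ψ) : Measurable (edgeTransfer D Φ f ψ) :=
  (hΦ.mul (hψ.comp hf)).indicator hD

variable (hRN : (μ.restrict R).map g = (μ.restrict D).withDensity fun y => .ofReal (Φ y))
  (hg : Measurable g) (hΦ : Measurable Φ)
include hRN hg hΦ

theorem setLIntegral_comp_eq_setLIntegral_mul {k : X → ℝ≥0∞} (hk : Measurable k) :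
    ∫⁻ x in R, k (g x) ∂μ = ∫⁻ y in D, .ofReal (Φ y) * k y ∂μ := by
  rw [← lintegral_map hk hg, hRN, lintegral_withDensity_eq_lintegral_mul _ hΦ.ennreal_ofReal hk]
  rfl

variable (hf : Measurable f) (hF : Measurable F) (hFg : ∀ᵐ x ∂μ.restrict R, F x = g x)
  (hfg : ∀ᵐ x ∂μ.restrict R, f (g x) = x)
include hf hF hFg hfg

theorem setLIntegral_preimage_inter_eq {h : X → ℝ≥0∞} (hh : Measurable h) (hA : MeasurableSet A) :
    ∫⁻ x in F ⁻¹' A ∩ R, h x ∂μ = ∫⁻ y in A ∩ D, .ofReal (Φ y) * h (f y) ∂μ :=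
  calc ∫⁻ x in F ⁻¹' A ∩ R, h x ∂μ = ∫⁻ x in R, A.indicator (h ∘ f) (g x) ∂μ := by
        rw [← Measure.restrict_restrict (hF hA), ← lintegral_indicator (hF hA)]
        refine lintegral_congr_ae ?_
        filter_upwards [hFg, hfg] with x hFx hfx
        classical
        simp only [indicator_apply, mem_preimage, hFx, Function.comp_apply, hfx]
    _ = ∫⁻ y in D, .ofReal (Φ y) * A.indicator (h ∘ f) y ∂μ :=
        setLIntegral_comp_eq_setLIntegral_mul hRN hg hΦ ((hh.comp hf).indicator hA)
    _ = ∫⁻ y in D, A.indicator (fun y => .ofReal (Φ y) * h (f y)) y ∂μ := by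
        refine lintegral_congr fun y => ?_
        rw [indicator_mul_right]
        rfl
    _ = ∫⁻ y in A ∩ D, .ofReal (Φ y) * h (f y) ∂μ := by
        rw [lintegral_indicator hA, Measure.restrict_restrict hA]

theorem setLIntegral_ofReal_edgeTransfer (hD : MeasurableSet D) (hΦ₀ : 0 ≤ Φ) (hψ : Measurable ψ)
    (hA : MeasurableSet A) :
    ∫⁻ y in A, .ofReal (edgeTransfer D Φ f ψ y) ∂μ = ∫⁻ x in F ⁻¹' A ∩ R, .ofReal (ψ x) ∂μ := by
  have hofReal : ∀ y, ENNReal.ofReal (edgeTransfer D Φ f ψ y)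
      = D.indicator (fun y => .ofReal (Φ y) * .ofReal (ψ (f y))) y := fun y => by
    by_cases hy : y ∈ D <;> simp [edgeTransfer, hy, ENNReal.ofReal_mul (hΦ₀ y)]
  rw [setLIntegral_preimage_inter_eq hRN hg hΦ hf hF hFg hfg hψ.ennreal_ofReal hA,
    lintegral_congr hofReal, lintegral_indicator hD, Measure.restrict_restrict hD, inter_comm]

theorem setIntegral_edgeTransfer (hD : MeasurableSet D) (hΦ₀ : 0 ≤ Φ) (hψ : Measurable ψ)
    (hψ₀ : 0 ≤ ψ) (hA : MeasurableSet A) :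
    ∫ y in A, edgeTransfer D Φ f ψ y ∂μ = ∫ x in F ⁻¹' A ∩ R, ψ x ∂μ := by
  rw [integral_eq_lintegral_of_nonneg_ae (ae_of_all _ (edgeTransfer_nonneg hΦ₀ hψ₀))
      (measurable_edgeTransfer hD hΦ hf hψ).aestronglyMeasurable,
    integral_eq_lintegral_of_nonneg_ae (ae_of_all _ hψ₀) hψ.aestronglyMeasurable,
    setLIntegral_ofReal_edgeTransfer hRN hg hΦ hf hF hFg hfg hD hΦ₀ hψ hA]

theorem integrable_edgeTransfer (hD : MeasurableSet D) (hΦ₀ : 0 ≤ Φ) (hψ : Measurable ψ)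
    (hψ₀ : 0 ≤ ψ) (hψi : Integrable ψ μ) : Integrable (edgeTransfer D Φ f ψ) μ := by
  refine ⟨(measurable_edgeTransfer hD hΦ hf hψ).aestronglyMeasurable,
    (hasFiniteIntegral_iff_ofReal (ae_of_all _ (edgeTransfer_nonneg hΦ₀ hψ₀))).2 ?_⟩
  calc ∫⁻ y, .ofReal (edgeTransfer D Φ f ψ y) ∂μ = ∫⁻ x in F ⁻¹' univ ∩ R, .ofReal (ψ x) ∂μ := by
        rw [← setLIntegral_univ,
          setLIntegral_ofReal_edgeTransfer hRN hg hΦ hf hF hFg hfg hD hΦ₀ hψ MeasurableSet.univ]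
    _ ≤ ∫⁻ x, .ofReal (ψ x) ∂μ := setLIntegral_le_lintegral _ _
    _ < ∞ := (hasFiniteIntegral_iff_ofReal (ae_of_all _ hψ₀)).1 hψi.2

end Measure

end Edge

theorem ae_eq_sum_edgeTransfer [MeasurableSpace X] {μ : Measure X} {ι : Type*} [Fintype ι]
    {R D : ι → Set X} {f g : ι → X → X} {Φ : ι → X → ℝ} {F : X → X} {ψ p : X → ℝ}
    (hR : ∀ i, MeasurableSet (R i)) (hD : ∀ i, MeasurableSet (D i))
    (hRdisj : Pairwise (AEDisjoint μ on R)) (hf : ∀ i, Measurable (f i))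
    (hg : ∀ i, Measurable (g i)) (hfg : ∀ i, ∀ᵐ x ∂μ.restrict (R i), f i (g i x) = x)
    (hΦ : ∀ i, Measurable (Φ i)) (hΦ₀ : ∀ i, 0 ≤ Φ i)
    (hRN : ∀ i, (μ.restrict (R i)).map (g i)
      = (μ.restrict (D i)).withDensity fun y => .ofReal (Φ i y))
    (hF : Measurable F) (hFg : ∀ i, ∀ᵐ x ∂μ.restrict (R i), F x = g i x)
    (hψ : Measurable ψ) (hψ₀ : 0 ≤ ψ) (hψi : Integrable ψ μ)
    (hsupp : ∀ᵐ x ∂μ, x ∉ ⋃ i, R i → ψ x = 0)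
    (hp : Integrable p μ)
    (hpψ : ∀ A, MeasurableSet A → ∫ x in A, p x ∂μ = ∫ x in F ⁻¹' A, ψ x ∂μ) :
    p =ᵐ[μ] fun x => ∑ i, edgeTransfer (D i) (Φ i) (f i) ψ x := by
  have hint : ∀ i, Integrable (edgeTransfer (D i) (Φ i) (f i) ψ) μ := fun i =>
    integrable_edgeTransfer (hRN i) (hg i) (hΦ i) (hf i) hF (hFg i) (hfg i) (hD i) (hΦ₀ i) hψ hψ₀
      hψi
  refine hp.ae_eq_of_forall_setIntegral_eq _ _ (integrable_finsetSum _ fun i _ => hint i)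
    fun A hA _ => ?_
  rw [hpψ A hA, setIntegral_eq_sum_setIntegral_inter (hF hA) hR hRdisj hψi.integrableOn hsupp,
    integral_finsetSum _ fun i _ => (hint i).integrableOn]
  exact Finset.sum_congr rfl fun i _ =>
    (setIntegral_edgeTransfer (hRN i) (hg i) (hΦ i) (hf i) hF (hFg i) (hfg i) (hD i) (hΦ₀ i) hψ hψ₀
      hA).symm

end BranchingSystem

theorem stmt8_general {X : Type*} [MeasurableSpace X] (μ : Measure X)
    {E0 E1 : Type*} (r : E1 → E0)
    (R : E1 → Set X) (D : E0 → Set X)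
    (hRmeas : ∀ e, MeasurableSet (R e)) (hDmeas : ∀ v, MeasurableSet (D v))
    (hRdisj : ∀ e d : E1, e ≠ d → μ (R e ∩ R d) = 0)
    (f finv : E1 → X → X) (hf : ∀ e, Measurable (f e)) (hfinv : ∀ e, Measurable (finv e))
    (hright : ∀ e, ∀ᵐ x ∂μ.restrict (R e), f e (finv e x) = x)
    -- Φ_{f_e} is the Radon–Nikodym derivative of μ∘f_e with respect to μ on D_{r(e)}:
    (Φ : E1 → X → ℝ) (hΦmeas : ∀ e, Measurable (Φ e)) (hΦnonneg : ∀ e, 0 ≤ Φ e)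
    (hRN : ∀ e, (μ.restrict (R e)).map (finv e)
      = (μ.restrict (D (r e))).withDensity (fun x => ENNReal.ofReal (Φ e x)))
    -- F is a nonsingular map with F = f_e⁻¹ a.e. on R_e:
    (F : X → X) (hFmeas : Measurable F)
    (hF : ∀ e, ∀ᵐ x ∂μ.restrict (R e), F x = finv e x)
    -- P_F is the Perron–Frobenius operator of F on L¹(X,μ):
    (PF : (X → ℝ) → (X → ℝ))
    (hPF : ∀ ψ : X → ℝ, Integrable ψ μ → Integrable (PF ψ) μ ∧
      ∀ A : Set X, MeasurableSet A → ∫ x in A, PF ψ x ∂μ = ∫ x in F ⁻¹' A, ψ x ∂μ)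
    -- the finitely many edges e_1, …, e_N:
    (N : ℕ) (e : Fin N → E1) (hinj : Function.Injective e)
    -- φ ∈ L²(X,μ) is real valued with support contained in R_{e_1} ∪ ⋯ ∪ R_{e_N}:
    (φ : X → ℝ) (hφmeas : Measurable φ) (hφL2 : MemLp φ 2 μ)
    (hsupp : ∀ᵐ x ∂μ, x ∉ ⋃ i : Fin N, R (e i) → φ x = 0) :
    PF (fun x => φ x ^ 2) =ᵐ[μ]
      fun x => ∑ i : Fin N,
        ((D (r (e i))).indicator (fun y => Real.sqrt (Φ (e i) y) * φ (f (e i) y)) x) ^ 2 := by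
  have hφ2 : Integrable (fun x => φ x ^ 2) μ := hφL2.integrable_sq
  obtain ⟨hPFi, hPFA⟩ := hPF _ hφ2
  have hRdisj' : Pairwise (AEDisjoint μ on fun i => R (e i)) := fun i j hij =>
    hRdisj _ _ (hinj.ne hij)
  have hsupp' : ∀ᵐ x ∂μ, x ∉ ⋃ i, R (e i) → φ x ^ 2 = 0 :=
    hsupp.mono fun x hx hxR => by simp [hx hxR]
  refine (BranchingSystem.ae_eq_sum_edgeTransfer (D := fun i => D (r (e i)))
    (fun i => hRmeas (e i)) (fun i => hDmeas _) hRdisj' (fun i => hf (e i)) (fun i => hfinv (e i))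
    (fun i => hright (e i)) (fun i => hΦmeas (e i)) (fun i => hΦnonneg (e i)) (fun i => hRN (e i))
    hFmeas (fun i => hF (e i)) (hφmeas.pow_const 2) (fun x => sq_nonneg (φ x)) hφ2 hsupp' hPFi
    hPFA).trans (ae_of_all _ fun x => ?_)
  exact Finset.sum_congr rfl fun i _ =>
    (BranchingSystem.sq_indicator_sqrt_mul_comp (hΦnonneg (e i)) φ x).symm

/-- In a nonsingular E-branching system `(X, μ, F)`, if `φ ∈ L²(X,μ)` is real
valued with support in a finite union `R_{e_1} ∪ ⋯ ∪ R_{e_N}`, then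
`P_F(φ²) = Σ_{i=1}^N (π(S_{e_i})* φ)²`, where `π(S_e)* φ = χ_{D_{r(e)}}·Φ_{f_e}^{1/2}·(φ∘f_e)`
and `P_F` is the Perron–Frobenius operator of `F`. -/
theorem stmt8 {X : Type*} [MeasurableSpace X] (μ : Measure X) [SigmaFinite μ]
    {E0 E1 : Type*} [Countable E0] [Countable E1] (r s : E1 → E0)
    (R : E1 → Set X) (D : E0 → Set X)
    (hRmeas : ∀ e, MeasurableSet (R e)) (hDmeas : ∀ v, MeasurableSet (D v))
    (hRdisj : ∀ e d : E1, e ≠ d → μ (R e ∩ R d) = 0)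
    (hDdisj : ∀ u v : E0, u ≠ v → μ (D u ∩ D v) = 0)
    (hRD : ∀ e : E1, μ (R e \ D (s e)) = 0)
    (f finv : E1 → X → X) (hf : ∀ e, Measurable (f e)) (hfinv : ∀ e, Measurable (finv e))
    (hmaps : ∀ e, Set.MapsTo (f e) (D (r e)) (R e))
    (hmapsinv : ∀ e, Set.MapsTo (finv e) (R e) (D (r e)))
    (himage : ∀ e, μ ((f e '' D (r e)) ∆ R e) = 0)
    (hright : ∀ e, ∀ᵐ x ∂μ.restrict (R e), f e (finv e x) = x)
    (hleft : ∀ e, ∀ᵐ x ∂μ.restrict (D (r e)), finv e (f e x) = x)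
    -- Φ_{f_e} is the Radon–Nikodym derivative of μ∘f_e with respect to μ on D_{r(e)}:
    (Φ : E1 → X → ℝ) (hΦmeas : ∀ e, Measurable (Φ e)) (hΦnonneg : ∀ e, 0 ≤ Φ e)
    (hRN : ∀ e, (μ.restrict (R e)).map (finv e)
      = (μ.restrict (D (r e))).withDensity (fun x => ENNReal.ofReal (Φ e x)))
    -- F is a nonsingular map with F = f_e⁻¹ a.e. on R_e:
    (F : X → X) (hFmeas : Measurable F)
    (hFns : ∀ A : Set X, MeasurableSet A → μ A = 0 → μ (F ⁻¹' A) = 0)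
    (hF : ∀ e, ∀ᵐ x ∂μ.restrict (R e), F x = finv e x)
    -- P_F is the Perron–Frobenius operator of F on L¹(X,μ):
    (PF : (X → ℝ) → (X → ℝ))
    (hPF : ∀ ψ : X → ℝ, Integrable ψ μ → Integrable (PF ψ) μ ∧
      ∀ A : Set X, MeasurableSet A → ∫ x in A, PF ψ x ∂μ = ∫ x in F ⁻¹' A, ψ x ∂μ)
    -- the finitely many edges e_1, …, e_N:
    (N : ℕ) (e : Fin N → E1) (hinj : Function.Injective e)
    -- φ ∈ L²(X,μ) is real valued with support contained in R_{e_1} ∪ ⋯ ∪ R_{e_N}: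
    (φ : X → ℝ) (hφmeas : Measurable φ) (hφL2 : MemLp φ 2 μ)
    (hsupp : ∀ᵐ x ∂μ, x ∉ ⋃ i : Fin N, R (e i) → φ x = 0) :
    PF (fun x => φ x ^ 2) =ᵐ[μ]
      fun x => ∑ i : Fin N,
        ((D (r (e i))).indicator (fun y => Real.sqrt (Φ (e i) y) * φ (f (e i) y)) x) ^ 2 :=
  stmt8_general μ r R D hRmeas hDmeas hRdisj f finv hf hfinv hright Φ hΦmeas hΦnonneg hRN F hFmeas
    hF PF hPF N e hinj φ hφmeas hφL2 hsupp
end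

section
/- Let (X,μ,F) be a nonsingular E-branching system for a countable directed graph E with infinitely many edges e_1, e_2, …, and let φ ∈ L²(X,μ) be real-valued with support in ⋃_{i=1}^∞ R_{e_i}. Then Σ_{i=1}^N (π(S_{e_i})* φ)² converges in L¹(X,μ) norm to P_F(φ²) as N → ∞. -/
/-!
For each edge `e`, the change of variables `x = f_e y` (whose Jacobian is `Φ_{f_e}`) turns
`∫_A (π(S_e)^* φ)²` into `∫_{F⁻¹A ∩ R_e} φ²`. Summing over the a.e. disjoint sets `R_{e_i}`,
`i < N`, and comparing with `∫_A P_F(φ²) = ∫_{F⁻¹A} φ²` shows that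
`h_N = P_F(φ²) - ∑_{i<N} (π(S_{e_i})^* φ)²` has set integrals `∫_{F⁻¹A \ U_N} φ² ≥ 0`, where
`U_N = ⋃_{i<N} R_{e_i}`. Hence `h_N ≥ 0` a.e. and `‖h_N‖₁ = ∫_{X \ U_N} φ²`, which decreases
to `∫_{X \ ⋃ R_{e_i}} φ² = 0`.
-/

open MeasureTheory Set Filter
open scoped ENNReal symmDiff

theorem sq_indicator_sqrt_mul {X : Type*} {D : Set X} {Φ φ : X → ℝ} (hΦ0 : 0 ≤ Φ) (x : X) :
    D.indicator (fun y => Real.sqrt (Φ y) * φ y) x ^ 2 =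
      D.indicator (fun y => Φ y * φ y ^ 2) x := by
  by_cases hx : x ∈ D <;> simp [hx, mul_pow, Real.sq_sqrt (hΦ0 x)]

section

variable {X : Type*} [MeasurableSpace X] {μ : Measure X}

theorem integral_biUnion_finset₀ {E : Type*} [NormedAddCommGroup E] [NormedSpace ℝ E]
    {f : X → E} {ι : Type*} (t : Finset ι) {s : ι → Set X}
    (hs : ∀ i ∈ t, NullMeasurableSet (s i) μ)
    (hd : (t : Set ι).Pairwise (Function.onFun (AEDisjoint μ) s))
    (hf : ∀ i ∈ t, IntegrableOn f (s i) μ) :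
    ∫ x in ⋃ i ∈ t, s i, f x ∂μ = ∑ i ∈ t, ∫ x in s i, f x ∂μ := by
  classical
  induction t using Finset.induction_on with
  | empty => simp
  | insert a t hat IH =>
    simp only [Finset.coe_insert, Finset.forall_mem_insert, Set.pairwise_insert,
      Finset.set_biUnion_insert] at hs hf hd ⊢
    have hdisj : AEDisjoint μ (s a) (⋃ i ∈ t, s i) := by
      rw [AEDisjoint, inter_iUnion₂]
      exact (measure_biUnion_null_iff t.countable_toSet).2 fun i hi =>
        (hd.2 i hi (ne_of_mem_of_not_mem hi hat).symm).1
    rw [setIntegral_union₀ hdisj (Finset.nullMeasurableSet_biUnion _ hs.2) hf.1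
      (integrableOn_finset_iUnion.2 hf.2), Finset.sum_insert hat, IH hs.2 hd.1 hf.2]

theorem integral_abs_eq_setIntegral_of_forall_setIntegral_eq {F : X → X}
    {h q : X → ℝ} (hh : Integrable h μ) (hq : 0 ≤ q) {T : Set X}
    (H : ∀ A, MeasurableSet A → ∫ x in A, h x ∂μ = ∫ x in F ⁻¹' A ∩ T, q x ∂μ) :
    ∫ x, |h x| ∂μ = ∫ x in T, q x ∂μ := by
  have h_nonneg : 0 ≤ᵐ[μ] h := ae_nonneg_of_forall_setIntegral_nonneg hh fun A hA _ =>
    (H A hA).symm ▸ integral_nonneg fun x => hq x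
  calc ∫ x, |h x| ∂μ = ∫ x, h x ∂μ :=
        integral_congr_ae (h_nonneg.mono fun x hx => abs_of_nonneg hx)
    _ = ∫ x in T, q x ∂μ := by simpa using H univ MeasurableSet.univ

theorem tendsto_integral_abs_of_forall_setIntegral_eq {F : X → X}
    {h : ℕ → X → ℝ} {q : X → ℝ} (hh : ∀ N, Integrable (h N) μ) (hq0 : 0 ≤ q)
    (hq : Integrable q μ) {T : ℕ → Set X} (hT : ∀ N, MeasurableSet (T N)) (hT_anti : Antitone T)
    (hq_null : ∀ᵐ x ∂μ, x ∈ ⋂ N, T N → q x = 0)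
    (H : ∀ N A, MeasurableSet A → ∫ x in A, h N x ∂μ = ∫ x in F ⁻¹' A ∩ T N, q x ∂μ) :
    Tendsto (fun N => ∫ x, |h N x| ∂μ) atTop (nhds 0) := by
  simp only [fun N => integral_abs_eq_setIntegral_of_forall_setIntegral_eq (hh N) hq0 (H N)]
  simpa [setIntegral_eq_zero_of_ae_eq_zero hq_null] using
    tendsto_setIntegral_of_antitone hT hT_anti ⟨0, hq.integrableOn⟩


theorem tendsto_integral_abs_sum_sub_of_forall_setIntegral_eq {F : X → X} (hF : Measurable F)
    {q P : X → ℝ} (hq0 : 0 ≤ q) (hq : Integrable q μ) {s : ℕ → Set X}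
    (hs : ∀ i, MeasurableSet (s i)) (hd : Pairwise (Function.onFun (AEDisjoint μ) s))
    (hq_null : ∀ᵐ x ∂μ, x ∉ ⋃ i, s i → q x = 0)
    {g : ℕ → X → ℝ} (hg : ∀ i, Integrable (g i) μ)
    (hg_set : ∀ i A, MeasurableSet A → ∫ x in A, g i x ∂μ = ∫ x in F ⁻¹' A ∩ s i, q x ∂μ)
    (hP : Integrable P μ)
    (hP_set : ∀ A, MeasurableSet A → ∫ x in A, P x ∂μ = ∫ x in F ⁻¹' A, q x ∂μ) :
    Tendsto (fun N => ∫ x, |∑ i ∈ Finset.range N, g i x - P x| ∂μ) atTop (nhds 0) := by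
  set U : ℕ → Set X := fun N => ⋃ i ∈ Finset.range N, s i
  have hU : ∀ N, MeasurableSet (U N) := fun N =>
    (Finset.range N).measurableSet_biUnion fun i _ => hs i
  have hsum_int : ∀ N, Integrable (fun x => ∑ i ∈ Finset.range N, g i x) μ := fun N =>
    integrable_finsetSum _ fun i _ => hg i
  simp_rw [abs_sub_comm]
  refine tendsto_integral_abs_of_forall_setIntegral_eq (F := F) (T := fun N => (U N)ᶜ)
    (fun N => hP.sub (hsum_int N)) hq0 hq (fun N => (hU N).compl) ?_ ?_ ?_
  · exact fun a b hab => compl_subset_compl.2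
      (biUnion_subset_biUnion_left (Finset.range_subset_range.2 hab))
  · filter_upwards [hq_null] with x hqx hx
    refine hqx fun hxs => ?_
    obtain ⟨i, hi⟩ := mem_iUnion.1 hxs
    exact mem_iInter.1 hx (i + 1) (mem_biUnion (Finset.self_mem_range_succ i) hi)
  · intro N A hA
    have hF_sum : ∑ i ∈ Finset.range N, ∫ x in F ⁻¹' A ∩ s i, q x ∂μ
        = ∫ x in F ⁻¹' A ∩ U N, q x ∂μ := by
      rw [inter_iUnion₂, integral_biUnion_finset₀ _
        (fun i _ => ((hF hA).inter (hs i)).nullMeasurableSet)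
        (fun i _ j _ hij => (hd hij).mono inter_subset_right inter_subset_right)
        (fun i _ => hq.integrableOn)]
    rw [integral_sub hP.integrableOn (hsum_int N).integrableOn,
      integral_finsetSum _ fun i _ => (hg i).integrableOn, hP_set A hA,
      Finset.sum_congr rfl fun i _ => hg_set i A hA, hF_sum,
      ← integral_inter_add_sdiff (hU N) hq.integrableOn, sdiff_eq]
    ring

section Branch

variable {R D : Set X} {f finv F : X → X} {Φ : X → ℝ}

theorem setLIntegral_inter_mul_comp_eq (hf : Measurable f) (hfinv : Measurable finv)
    (hF : Measurable F) (hΦ : Measurable Φ)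
    (hRN : (μ.restrict R).map finv = (μ.restrict D).withDensity fun x => ENNReal.ofReal (Φ x))
    (hright : ∀ᵐ x ∂μ.restrict R, f (finv x) = x) (hFR : ∀ᵐ x ∂μ.restrict R, F x = finv x)
    {G : X → ℝ≥0∞} (hG : Measurable G) {A : Set X} (hA : MeasurableSet A) :
    ∫⁻ x in A ∩ D, ENNReal.ofReal (Φ x) * G (f x) ∂μ = ∫⁻ x in F ⁻¹' A ∩ R, G x ∂μ := by
  have hGf : Measurable fun x => G (f x) := hG.comp hf
  calc ∫⁻ x in A ∩ D, ENNReal.ofReal (Φ x) * G (f x) ∂μ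
      = ∫⁻ x in A, G (f x) ∂(μ.restrict D).withDensity fun x => ENNReal.ofReal (Φ x) := by
        rw [setLIntegral_withDensity_eq_setLIntegral_mul _ hΦ.ennreal_ofReal hGf hA,
          Measure.restrict_restrict hA]
        rfl
    _ = ∫⁻ x in finv ⁻¹' A, G (f (finv x)) ∂μ.restrict R := by
        rw [← hRN, setLIntegral_map hA hGf hfinv]
    _ = ∫⁻ x in F ⁻¹' A, G x ∂μ.restrict R := by
        rw [← lintegral_indicator (hfinv hA), ← lintegral_indicator (hF hA)]
        refine lintegral_congr_ae ?_
        filter_upwards [hright, hFR] with x hfx hFx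
        classical
        simp only [indicator_apply, mem_preimage, hfx, hFx]
    _ = ∫⁻ x in F ⁻¹' A ∩ R, G x ∂μ := by rw [Measure.restrict_restrict (hF hA)]

theorem setIntegral_indicator_mul_comp_eq (hD : MeasurableSet D) (hf : Measurable f)
    (hfinv : Measurable finv) (hF : Measurable F) (hΦ : Measurable Φ) (hΦ0 : 0 ≤ Φ)
    (hRN : (μ.restrict R).map finv = (μ.restrict D).withDensity fun x => ENNReal.ofReal (Φ x))
    (hright : ∀ᵐ x ∂μ.restrict R, f (finv x) = x) (hFR : ∀ᵐ x ∂μ.restrict R, F x = finv x)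
    {ψ : X → ℝ} (hψ : Measurable ψ) (hψ0 : 0 ≤ ψ) {A : Set X} (hA : MeasurableSet A) :
    ∫ x in A, D.indicator (fun y => Φ y * ψ (f y)) x ∂μ = ∫ x in F ⁻¹' A ∩ R, ψ x ∂μ := by
  rw [setIntegral_indicator hD,
    integral_eq_lintegral_of_nonneg_ae (.of_forall fun x => mul_nonneg (hΦ0 x) (hψ0 (f x)))
      (hΦ.mul (hψ.comp hf)).aestronglyMeasurable,
    integral_eq_lintegral_of_nonneg_ae (.of_forall hψ0) hψ.aestronglyMeasurable]
  simp_rw [ENNReal.ofReal_mul (hΦ0 _)]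
  rw [setLIntegral_inter_mul_comp_eq hf hfinv hF hΦ hRN hright hFR hψ.ennreal_ofReal hA]

theorem integrable_indicator_mul_comp (hD : MeasurableSet D) (hf : Measurable f)
    (hfinv : Measurable finv) (hF : Measurable F) (hΦ : Measurable Φ) (hΦ0 : 0 ≤ Φ)
    (hRN : (μ.restrict R).map finv = (μ.restrict D).withDensity fun x => ENNReal.ofReal (Φ x))
    (hright : ∀ᵐ x ∂μ.restrict R, f (finv x) = x) (hFR : ∀ᵐ x ∂μ.restrict R, F x = finv x)
    {ψ : X → ℝ} (hψ : Measurable ψ) (hψ0 : 0 ≤ ψ) (hψR : IntegrableOn ψ R μ) :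
    Integrable (D.indicator fun y => Φ y * ψ (f y)) μ := by
  refine (integrable_indicator_iff hD).2 ⟨(hΦ.mul (hψ.comp hf)).aestronglyMeasurable, ?_⟩
  rw [hasFiniteIntegral_iff_ofReal (.of_forall fun x => mul_nonneg (hΦ0 x) (hψ0 (f x)))]
  simp_rw [ENNReal.ofReal_mul (hΦ0 _)]
  have := setLIntegral_inter_mul_comp_eq hf hfinv hF hΦ hRN hright hFR hψ.ennreal_ofReal
    MeasurableSet.univ
  rw [univ_inter, preimage_univ, univ_inter] at this
  rw [this, ← hasFiniteIntegral_iff_ofReal (.of_forall hψ0)]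
  exact hψR.2

end Branch

end

theorem stmt12_general {X : Type*} [MeasurableSpace X] (μ : Measure X)
    {E0 E1 : Type*} (r : E1 → E0)
    (R : E1 → Set X) (D : E0 → Set X)
    (hRmeas : ∀ e, MeasurableSet (R e)) (hDmeas : ∀ v, MeasurableSet (D v))
    (hRdisj : ∀ e d : E1, e ≠ d → μ (R e ∩ R d) = 0)
    (f finv : E1 → X → X) (hf : ∀ e, Measurable (f e)) (hfinv : ∀ e, Measurable (finv e))
    (hright : ∀ e, ∀ᵐ x ∂μ.restrict (R e), f e (finv e x) = x)
    -- Φ_{f_e} is the Radon–Nikodym derivative of μ∘f_e with respect to μ on D_{r(e)}: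
    (Φ : E1 → X → ℝ) (hΦmeas : ∀ e, Measurable (Φ e)) (hΦnonneg : ∀ e, 0 ≤ Φ e)
    (hRN : ∀ e, (μ.restrict (R e)).map (finv e)
      = (μ.restrict (D (r e))).withDensity (fun x => ENNReal.ofReal (Φ e x)))
    -- F is a nonsingular map with F = f_e⁻¹ a.e. on R_e:
    (F : X → X) (hFmeas : Measurable F)
    (hF : ∀ e, ∀ᵐ x ∂μ.restrict (R e), F x = finv e x)
    -- P_F is the Perron–Frobenius operator of F on L¹(X,μ):
    (PF : (X → ℝ) → (X → ℝ))
    (hPF : ∀ ψ : X → ℝ, Integrable ψ μ → Integrable (PF ψ) μ ∧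
      ∀ A : Set X, MeasurableSet A → ∫ x in A, PF ψ x ∂μ = ∫ x in F ⁻¹' A, ψ x ∂μ)
    -- the infinitely many edges e_1, e_2, … :
    (e : ℕ → E1) (hinj : Function.Injective e)
    -- φ ∈ L²(X,μ) is real valued with support contained in ⋃_{i=1}^∞ R_{e_i}:
    (φ : X → ℝ) (hφmeas : Measurable φ) (hφL2 : MemLp φ 2 μ)
    (hsupp : ∀ᵐ x ∂μ, x ∉ ⋃ i : ℕ, R (e i) → φ x = 0) :
    Tendsto
      (fun N : ℕ => ∫ x,
        |(∑ i ∈ Finset.range N,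
            ((D (r (e i))).indicator (fun y => Real.sqrt (Φ (e i) y) * φ (f (e i) y)) x) ^ 2)
          - PF (fun y => φ y ^ 2) x| ∂μ)
      atTop (nhds 0) := by
  set q : X → ℝ := fun y => φ y ^ 2
  have hq : Measurable q := hφmeas.pow_const 2
  have hq0 : 0 ≤ q := fun x => sq_nonneg _
  have hq_int : Integrable q μ := hφL2.integrable_sq
  simp_rw [sq_indicator_sqrt_mul (hΦnonneg _)]
  have hPF_q := hPF q hq_int
  refine tendsto_integral_abs_sum_sub_of_forall_setIntegral_eq hFmeas hq0 hq_int
    (fun i => hRmeas (e i)) (fun i j hij => hRdisj _ _ (hinj.ne hij))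
    (hsupp.mono fun x hφx hx => sq_eq_zero_iff.2 (hφx hx)) (fun i => ?_) (fun i A hA => ?_)
    hPF_q.1 hPF_q.2
  · exact integrable_indicator_mul_comp (hDmeas _) (hf _) (hfinv _) hFmeas (hΦmeas _)
      (hΦnonneg _) (hRN _) (hright _) (hF _) hq hq0 hq_int.integrableOn
  · exact setIntegral_indicator_mul_comp_eq (hDmeas _) (hf _) (hfinv _) hFmeas (hΦmeas _)
      (hΦnonneg _) (hRN _) (hright _) (hF _) hq hq0 hA

/-- In a nonsingular E-branching system `(X, μ, F)` whose graph has infinitely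
many edges `e_1, e_2, …`, if `φ ∈ L²(X,μ)` is real valued with support in `⋃_{i=1}^∞ R_{e_i}`,
then `Σ_{i=1}^N (π(S_{e_i})* φ)²` converges in `L¹(X,μ)` norm to `P_F(φ²)` as `N → ∞`. -/
theorem stmt12 {X : Type*} [MeasurableSpace X] (μ : Measure X) [SigmaFinite μ]
    {E0 E1 : Type*} [Countable E0] [Countable E1] (r s : E1 → E0)
    (R : E1 → Set X) (D : E0 → Set X)
    (hRmeas : ∀ e, MeasurableSet (R e)) (hDmeas : ∀ v, MeasurableSet (D v))
    (hRdisj : ∀ e d : E1, e ≠ d → μ (R e ∩ R d) = 0)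
    (hDdisj : ∀ u v : E0, u ≠ v → μ (D u ∩ D v) = 0)
    (hRD : ∀ e : E1, μ (R e \ D (s e)) = 0)
    (f finv : E1 → X → X) (hf : ∀ e, Measurable (f e)) (hfinv : ∀ e, Measurable (finv e))
    (hmaps : ∀ e, Set.MapsTo (f e) (D (r e)) (R e))
    (hmapsinv : ∀ e, Set.MapsTo (finv e) (R e) (D (r e)))
    (himage : ∀ e, μ ((f e '' D (r e)) ∆ R e) = 0)
    (hright : ∀ e, ∀ᵐ x ∂μ.restrict (R e), f e (finv e x) = x)
    (hleft : ∀ e, ∀ᵐ x ∂μ.restrict (D (r e)), finv e (f e x) = x)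
    -- Φ_{f_e} is the Radon–Nikodym derivative of μ∘f_e with respect to μ on D_{r(e)}:
    (Φ : E1 → X → ℝ) (hΦmeas : ∀ e, Measurable (Φ e)) (hΦnonneg : ∀ e, 0 ≤ Φ e)
    (hRN : ∀ e, (μ.restrict (R e)).map (finv e)
      = (μ.restrict (D (r e))).withDensity (fun x => ENNReal.ofReal (Φ e x)))
    -- F is a nonsingular map with F = f_e⁻¹ a.e. on R_e:
    (F : X → X) (hFmeas : Measurable F)
    (hFns : ∀ A : Set X, MeasurableSet A → μ A = 0 → μ (F ⁻¹' A) = 0)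
    (hF : ∀ e, ∀ᵐ x ∂μ.restrict (R e), F x = finv e x)
    -- P_F is the Perron–Frobenius operator of F on L¹(X,μ):
    (PF : (X → ℝ) → (X → ℝ))
    (hPF : ∀ ψ : X → ℝ, Integrable ψ μ → Integrable (PF ψ) μ ∧
      ∀ A : Set X, MeasurableSet A → ∫ x in A, PF ψ x ∂μ = ∫ x in F ⁻¹' A, ψ x ∂μ)
    -- the infinitely many edges e_1, e_2, … :
    (e : ℕ → E1) (hinj : Function.Injective e)
    -- φ ∈ L²(X,μ) is real valued with support contained in ⋃_{i=1}^∞ R_{e_i}: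
    (φ : X → ℝ) (hφmeas : Measurable φ) (hφL2 : MemLp φ 2 μ)
    (hsupp : ∀ᵐ x ∂μ, x ∉ ⋃ i : ℕ, R (e i) → φ x = 0) :
    Tendsto
      (fun N : ℕ => ∫ x,
        |(∑ i ∈ Finset.range N,
            ((D (r (e i))).indicator (fun y => Real.sqrt (Φ (e i) y) * φ (f (e i) y)) x) ^ 2)
          - PF (fun y => φ y ^ 2) x| ∂μ)
      atTop (nhds 0) :=
  stmt12_general μ r R D hRmeas hDmeas hRdisj f finv hf hfinv hright Φ hΦmeas hΦnonneg hRN F hFmeas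
    hF PF hPF e hinj φ hφmeas hφL2 hsupp
end

section
/- Let (X,μ,F) be a nonsingular E-branching system, e an edge, f_e : D_{r(e)} → R_e with Radon–Nikodym derivative Φ_{f_e} of μ∘f_e on D_{r(e)}, and F|_{R_e} = f_e⁻¹ a.e. Then for real u, v ∈ L²(X,μ) supported in R_e with uv ∈ L¹(X,μ), the function χ_{D_{r(e)}}·Φ_{f_e}·(u∘f_e)·(v∘f_e) equals P_F(uv), i.e., for every measurable set A, ∫_A χ_{D_{r(e)}}·Φ_{f_e}·(u∘f_e)·(v∘f_e) dμ = ∫_{F⁻¹(A)} uv dμ. -/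
open MeasureTheory Set
open scoped ENNReal symmDiff

/-! Since `μ|_R ∘ finv⁻¹` has density `Φ` on `D`, the `Φ`-weighted integral over `D` of
`χ_A · (uv ∘ f)` is the integral over `R` of `(χ_A · (uv ∘ f)) ∘ finv`. On `R` we have
`F = finv` and `f ∘ finv = id`, so this integrand is `χ_{F⁻¹(A)} · uv`, and off `R` the product
`uv` vanishes because `u` does. -/

section ChangeOfVariables

variable {X Y E : Type*} [MeasurableSpace X] [MeasurableSpace Y]
  [NormedAddCommGroup E] [NormedSpace ℝ E]

theorem integral_smul_eq_integral_comp_of_map_eq_withDensity {ν : Measure Y} {ρ : Measure X}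
    {φ : Y → X} (hφ : AEMeasurable φ ν) {Φ : X → ℝ} (hΦ : AEMeasurable Φ ρ)
    (hΦ_nonneg : ∀ᵐ x ∂ρ, 0 ≤ Φ x)
    (hmap : ν.map φ = ρ.withDensity fun x => ENNReal.ofReal (Φ x))
    {g : X → E} (hg : StronglyMeasurable g) :
    ∫ x, Φ x • g x ∂ρ = ∫ y, g (φ y) ∂ν := by
  rw [← integral_map hφ hg.aestronglyMeasurable, hmap,
    integral_withDensity_eq_integral_toReal_smul₀ hΦ.ennreal_ofReal
      (Filter.Eventually.of_forall fun _ => ENNReal.ofReal_lt_top)]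
  refine integral_congr_ae ?_
  filter_upwards [hΦ_nonneg] with x hx
  rw [ENNReal.toReal_ofReal hx]

theorem setIntegral_preimage_eq_setIntegral_indicator_comp {μ : Measure X} {R A : Set X}
    (hR : MeasurableSet R) {f finv F : X → X} (hF : Measurable F) (hA : MeasurableSet A)
    (hright : ∀ᵐ x ∂μ.restrict R, f (finv x) = x) (hFfinv : ∀ᵐ x ∂μ.restrict R, F x = finv x)
    {w : X → E} (hw : ∀ᵐ x ∂μ, x ∉ R → w x = 0) :
    ∫ x in F ⁻¹' A, w x ∂μ = ∫ x in R, A.indicator (fun y => w (f y)) (finv x) ∂μ := by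
  rw [← integral_indicator (hF hA), ← integral_indicator hR]
  refine integral_congr_ae ?_
  filter_upwards [(ae_restrict_iff' hR).mp hright, (ae_restrict_iff' hR).mp hFfinv, hw]
    with x hfx hFx hwx
  by_cases hx : x ∈ R
  · by_cases hAx : finv x ∈ A <;> simp [hx, hAx, hFx hx, hfx hx]
  · simp [hx, hwx hx]

end ChangeOfVariables

theorem stmt13_general {X : Type*} [MeasurableSpace X] (μ : Measure X)
    (Re De : Set X) (hRmeas : MeasurableSet Re) (hDmeas : MeasurableSet De)
    (f finv : X → X) (hf : Measurable f) (hfinv : Measurable finv)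
    (hright : ∀ᵐ x ∂μ.restrict Re, f (finv x) = x)
    (Φ : X → ℝ) (hΦmeas : Measurable Φ) (hΦnonneg : 0 ≤ Φ)
    (hRN : (μ.restrict Re).map finv = (μ.restrict De).withDensity (fun x => ENNReal.ofReal (Φ x)))
    (F : X → X) (hFmeas : Measurable F)
    (hF : ∀ᵐ x ∂μ.restrict Re, F x = finv x)
    (u v : X → ℝ) (humeas : Measurable u) (hvmeas : Measurable v)
    (husupp : ∀ᵐ x ∂μ, x ∉ Re → u x = 0) :
    ∀ A : Set X, MeasurableSet A →
      ∫ x in A, De.indicator (fun y => Φ y * (u (f y) * v (f y))) x ∂μ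
        = ∫ x in F ⁻¹' A, u x * v x ∂μ := by
  intro A hA
  have huv_supp : ∀ᵐ x ∂μ, x ∉ Re → u x * v x = 0 := by
    filter_upwards [husupp] with x hx hxR
    rw [hx hxR, zero_mul]
  have hg : StronglyMeasurable (A.indicator fun y => u (f y) * v (f y)) :=
    (((humeas.comp hf).mul (hvmeas.comp hf)).indicator hA).stronglyMeasurable
  calc ∫ x in A, De.indicator (fun y => Φ y * (u (f y) * v (f y))) x ∂μ
      = ∫ x in De, Φ x • A.indicator (fun y => u (f y) * v (f y)) x ∂μ := by
        simp only [setIntegral_indicator hDmeas, setIntegral_indicator hA, smul_eq_mul,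
          ← indicator_mul_right, inter_comm]
    _ = ∫ x in Re, A.indicator (fun y => u (f y) * v (f y)) (finv x) ∂μ :=
        integral_smul_eq_integral_comp_of_map_eq_withDensity hfinv.aemeasurable
          hΦmeas.aemeasurable (Filter.Eventually.of_forall hΦnonneg) hRN hg
    _ = ∫ x in F ⁻¹' A, u x * v x ∂μ :=
        (setIntegral_preimage_eq_setIntegral_indicator_comp hRmeas hFmeas hA hright hF
          huv_supp).symm

/-- For an edge `e` of a nonsingular E-branching system, with
`f_e : D_{r(e)} → R_e`, Radon–Nikodym derivative `Φ_{f_e}` of `μ∘f_e` on `D_{r(e)}`, and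
`F = f_e⁻¹` a.e. on `R_e`, and real `u, v ∈ L²(X,μ)` supported in `R_e` with `uv ∈ L¹(X,μ)`,
the function `χ_{D_{r(e)}}·Φ_{f_e}·(u∘f_e)·(v∘f_e)` equals `P_F(uv)`: for every measurable `A`,
`∫_A χ_{D_{r(e)}}·Φ_{f_e}·(u∘f_e)·(v∘f_e) dμ = ∫_{F⁻¹(A)} u·v dμ`. -/
theorem stmt13 {X : Type*} [MeasurableSpace X] (μ : Measure X) [SigmaFinite μ]
    (Re De : Set X) (hRmeas : MeasurableSet Re) (hDmeas : MeasurableSet De)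
    (f finv : X → X) (hf : Measurable f) (hfinv : Measurable finv)
    (hmaps : Set.MapsTo f De Re) (hmapsinv : Set.MapsTo finv Re De)
    (himage : μ ((f '' De) ∆ Re) = 0)
    (hright : ∀ᵐ x ∂μ.restrict Re, f (finv x) = x)
    (hleft : ∀ᵐ x ∂μ.restrict De, finv (f x) = x)
    (Φ : X → ℝ) (hΦmeas : Measurable Φ) (hΦnonneg : 0 ≤ Φ)
    (hRN : (μ.restrict Re).map finv = (μ.restrict De).withDensity (fun x => ENNReal.ofReal (Φ x)))
    (F : X → X) (hFmeas : Measurable F)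
    (hFns : ∀ A : Set X, MeasurableSet A → μ A = 0 → μ (F ⁻¹' A) = 0)
    (hF : ∀ᵐ x ∂μ.restrict Re, F x = finv x)
    (u v : X → ℝ) (humeas : Measurable u) (hvmeas : Measurable v)
    (huL2 : MemLp u 2 μ) (hvL2 : MemLp v 2 μ)
    (husupp : ∀ᵐ x ∂μ, x ∉ Re → u x = 0) (hvsupp : ∀ᵐ x ∂μ, x ∉ Re → v x = 0)
    (huv : Integrable (fun x => u x * v x) μ) :
    ∀ A : Set X, MeasurableSet A →
      ∫ x in A, De.indicator (fun y => Φ y * (u (f y) * v (f y))) x ∂μ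
        = ∫ x in F ⁻¹' A, u x * v x ∂μ :=
  stmt13_general μ Re De hRmeas hDmeas f finv hf hfinv hright Φ hΦmeas hΦnonneg hRN F hFmeas hF u v
    humeas hvmeas husupp
end
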